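/- arXiv:2105.03630 — 6 statements merged into one kernel-verified Lean document; each statement's English description precedes it below -/
import Mathlib

section
/- The angular numerical range W'(C) = {x* C x : x ∈ ℂⁿ, x ≠ 0} of a square complex matrix C is a convex cone in ℂ (viewed as ℝ²): it is closed under addition and under multiplication by positive reals. -/
/-!
Scaling `x` by `√r` multiplies `x* C x` by `r`. For `a = x* C x` and `b = y* C y`, expanding
`(s x + u y)* C (s x + u y) = s² a + b + s (u x* C y + conj u y* C x)` for real `s` and `|u| = 1`,
one can choose `u` so that the cross term is a nonnegative multiple `μ e` of any prescribed
`e ≠ 0`. With `e = a + b` and `s = 1` this gives the value `(1 + μ) (a + b)`, which rescales to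
`a + b`. If `b = -a ≠ 0`, take `e = a` and `s > 0` with `s² + μ s = 1`, which gives the value `0`.
-/

open Matrix ComplexConjugate RCLike

section Expansion

variable {R : Type*} [CommRing R] [StarRing R] {n : Type*} [Fintype n]

theorem star_smul_dotProduct_mulVec_smul (C : Matrix n n R) (c : R) (x : n → R) :
    star (c • x) ⬝ᵥ C *ᵥ (c • x) = star c * c * (star x ⬝ᵥ C *ᵥ x) := by
  simp only [mulVec_smul, dotProduct_smul, star_smul, smul_dotProduct, smul_eq_mul]
  ring

theorem star_smul_add_smul_dotProduct_mulVec (C : Matrix n n R) (s t : R) (x y : n → R) :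
    star (s • x + t • y) ⬝ᵥ C *ᵥ (s • x + t • y) =
      star s * s * (star x ⬝ᵥ C *ᵥ x) + star t * t * (star y ⬝ᵥ C *ᵥ y) +
        (star s * t * (star x ⬝ᵥ C *ᵥ y) + star t * s * (star y ⬝ᵥ C *ᵥ x)) := by
  simp only [star_add, mulVec_add, dotProduct_add, add_dotProduct, mulVec_smul, dotProduct_smul,
    star_smul, smul_dotProduct, smul_eq_mul]
  ring

end Expansion

variable {𝕜 : Type*} [RCLike 𝕜]

theorem exists_norm_eq_one_mul_eq_norm (w : 𝕜) : ∃ u : 𝕜, ‖u‖ = 1 ∧ u * w = ‖w‖ := by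
  rcases eq_or_ne w 0 with rfl | hw
  · exact ⟨1, norm_one, by simp⟩
  · refine ⟨‖w‖ / w, ?_, div_mul_cancel₀ _ hw⟩
    rw [norm_div, norm_ofReal, abs_norm, div_self (norm_ne_zero_iff.mpr hw)]

theorem exists_norm_eq_one_mul_add_conj_mul_eq_real_mul (p q : 𝕜) {e : 𝕜} (he : e ≠ 0) :
    ∃ u : 𝕜, ‖u‖ = 1 ∧ ∃ μ : ℝ, 0 ≤ μ ∧ u * p + conj u * q = μ * e := by
  obtain ⟨u, hu, huw⟩ := exists_norm_eq_one_mul_eq_norm (p / e - conj (q / e))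
  -- `(u * p + conj u * q) / e = u * (p / e - conj (q / e)) + (z + conj z)`, `z = u * conj (q / e)`
  have hreal := add_conj (u * conj (q / e))
  rw [map_mul, conj_conj] at hreal
  set ρ : ℝ := ‖p / e - conj (q / e)‖ + 2 * re (u * conj (q / e))
  have hρ : u * p + conj u * q = ρ * e := by
    have hp : p = p / e * e := (div_mul_cancel₀ p he).symm
    have hq : q = q / e * e := (div_mul_cancel₀ q he).symm
    rw [hp, hq]
    push_cast [ρ]
    linear_combination e * huw + e * hreal
  -- the left-hand side of `hρ` is odd in `u`
  rcases le_total 0 ρ with hρ0 | hρ0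
  · exact ⟨u, hu, ρ, hρ0, hρ⟩
  · refine ⟨-u, by rwa [norm_neg], -ρ, neg_nonneg.mpr hρ0, ?_⟩
    rw [map_neg, ofReal_neg]
    linear_combination -hρ

variable {n : Type*} [Fintype n]

theorem exists_star_smul_add_smul_dotProduct_mulVec_eq (C : Matrix n n 𝕜) (x y : n → 𝕜) {e : 𝕜}
    (he : e ≠ 0) : ∃ u : 𝕜, star u * u = 1 ∧ ∃ μ : ℝ, 0 ≤ μ ∧ ∀ s : ℝ,
      star ((s : 𝕜) • x + u • y) ⬝ᵥ C *ᵥ ((s : 𝕜) • x + u • y) =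
        s ^ 2 * (star x ⬝ᵥ C *ᵥ x) + star y ⬝ᵥ C *ᵥ y + s * μ * e := by
  obtain ⟨u, hu, μ, hμ, hcross⟩ :=
    exists_norm_eq_one_mul_add_conj_mul_eq_real_mul (star x ⬝ᵥ C *ᵥ y) (star y ⬝ᵥ C *ᵥ x) he
  have huu : star u * u = 1 := by rw [star_def, RCLike.conj_mul, hu]; simp
  refine ⟨u, huu, μ, hμ, fun s => ?_⟩
  rw [star_smul_add_smul_dotProduct_mulVec, huu, star_def, conj_ofReal]
  linear_combination (s : 𝕜) * hcross

def angularNumericalRange (C : Matrix n n 𝕜) : Set 𝕜 :=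
  {z | ∃ x : n → 𝕜, x ≠ 0 ∧ z = star x ⬝ᵥ C *ᵥ x}

variable {C : Matrix n n 𝕜} {a b : 𝕜}

theorem smul_mem_angularNumericalRange {r : ℝ} (hr : 0 < r) (ha : a ∈ angularNumericalRange C) :
    r • a ∈ angularNumericalRange C := by
  obtain ⟨x, hx, rfl⟩ := ha
  refine ⟨(√r : 𝕜) • x, smul_ne_zero (ofReal_ne_zero.mpr (Real.sqrt_pos.mpr hr).ne') hx, ?_⟩
  rw [star_smul_dotProduct_mulVec_smul, star_def, conj_ofReal, ← ofReal_mul,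
    Real.mul_self_sqrt hr.le, real_smul_eq_coe_mul]

theorem add_mem_angularNumericalRange_of_add_ne_zero (ha : a ∈ angularNumericalRange C)
    (hb : b ∈ angularNumericalRange C) (hab : a + b ≠ 0) : a + b ∈ angularNumericalRange C := by
  obtain ⟨x, -, rfl⟩ := ha
  obtain ⟨y, -, rfl⟩ := hb
  obtain ⟨u, -, μ, hμ, hq⟩ := exists_star_smul_add_smul_dotProduct_mulVec_eq C x y hab
  set z := ((1 : ℝ) : 𝕜) • x + u • y
  have hqz : star z ⬝ᵥ C *ᵥ z =
      ((1 + μ : ℝ) : 𝕜) * (star x ⬝ᵥ C *ᵥ x + star y ⬝ᵥ C *ᵥ y) := by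
    rw [hq 1]; push_cast; ring
  have h1μ : 0 < 1 + μ := by linarith
  have hz : z ≠ 0 := by
    rintro h
    rw [h, star_zero, zero_dotProduct, eq_comm] at hqz
    exact mul_ne_zero (ofReal_ne_zero.mpr h1μ.ne') hab hqz
  convert smul_mem_angularNumericalRange (inv_pos.mpr h1μ) ⟨z, hz, rfl⟩ using 1
  rw [hqz, real_smul_eq_coe_mul, ← mul_assoc, ← ofReal_mul, inv_mul_cancel₀ h1μ.ne', ofReal_one,
    one_mul]

theorem exists_pos_mul_add_eq_one (μ : ℝ) : ∃ s : ℝ, 0 < s ∧ s * (s + μ) = 1 := by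
  have hsq : √(μ ^ 2 + 4) ^ 2 = μ ^ 2 + 4 := Real.sq_sqrt (by positivity)
  have hlt : μ < √(μ ^ 2 + 4) := by nlinarith [Real.sqrt_nonneg (μ ^ 2 + 4)]
  exact ⟨(√(μ ^ 2 + 4) - μ) / 2, by linarith, by nlinarith⟩

theorem zero_mem_angularNumericalRange_of_neg_mem (ha : a ∈ angularNumericalRange C)
    (hna : -a ∈ angularNumericalRange C) (ha0 : a ≠ 0) : 0 ∈ angularNumericalRange C := by
  obtain ⟨x, -, hx⟩ := ha
  obtain ⟨y, -, hy⟩ := hna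
  obtain ⟨u, huu, μ, -, hq⟩ := exists_star_smul_add_smul_dotProduct_mulVec_eq C x y ha0
  obtain ⟨s, hs, hsμ⟩ := exists_pos_mul_add_eq_one μ
  refine ⟨(s : 𝕜) • x + u • y, fun h => ?_, ?_⟩
  · have hyx : u • y = (-(s : 𝕜)) • x := by
      rw [neg_smul]; exact eq_neg_of_add_eq_zero_right h
    have := congrArg (fun v => star v ⬝ᵥ C *ᵥ v) hyx
    rw [star_smul_dotProduct_mulVec_smul, star_smul_dotProduct_mulVec_smul, huu, one_mul, ← hx,
      ← hy, star_neg, star_def, conj_ofReal] at this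
    have hs2 : ((s ^ 2 + 1 : ℝ) : 𝕜) * a = 0 := by push_cast; linear_combination -this
    exact ha0 ((mul_eq_zero.mp hs2).resolve_left (ofReal_ne_zero.mpr (by positivity)))
  · rw [hq, ← hx, ← hy]
    have hsμC : (s : 𝕜) * (s + μ) = 1 := by exact_mod_cast hsμ
    linear_combination -a * hsμC

theorem add_mem_angularNumericalRange (ha : a ∈ angularNumericalRange C)
    (hb : b ∈ angularNumericalRange C) : a + b ∈ angularNumericalRange C := by
  by_cases hab : a + b = 0
  · rw [hab]
    by_cases ha0 : a = 0
    · exact ha0 ▸ ha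
    · rw [← neg_eq_of_add_eq_zero_right hab] at hb
      exact zero_mem_angularNumericalRange_of_neg_mem ha hb ha0
  · exact add_mem_angularNumericalRange_of_add_ne_zero ha hb hab

def angularNumericalRangeCone (C : Matrix n n 𝕜) : ConvexCone ℝ 𝕜 where
  carrier := angularNumericalRange C
  smul_mem' _ hr _ ha := smul_mem_angularNumericalRange hr ha
  add_mem' _ ha _ hb := add_mem_angularNumericalRange ha hb

/-- The angular numerical range is a convex cone: closed under addition and
multiplication by positive reals. -/
theorem angularNumericalRange_convexCone (n : ℕ) (C : Matrix (Fin n) (Fin n) ℂ) :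
    (∀ a ∈ {z : ℂ | ∃ x : Fin n → ℂ, x ≠ 0 ∧
        z = dotProduct (star x) (C.mulVec x)},
     ∀ b ∈ {z : ℂ | ∃ x : Fin n → ℂ, x ≠ 0 ∧
        z = dotProduct (star x) (C.mulVec x)},
      a + b ∈ {z : ℂ | ∃ x : Fin n → ℂ, x ≠ 0 ∧
        z = dotProduct (star x) (C.mulVec x)}) ∧
    (∀ r : ℝ, 0 < r →
      ∀ a ∈ {z : ℂ | ∃ x : Fin n → ℂ, x ≠ 0 ∧
        z = dotProduct (star x) (C.mulVec x)},
      r • a ∈ {z : ℂ | ∃ x : Fin n → ℂ, x ≠ 0 ∧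
        z = dotProduct (star x) (C.mulVec x)}) :=
  ⟨fun _ ha _ hb => (angularNumericalRangeCone C).add_mem ha hb,
    fun _ hr _ ha => (angularNumericalRangeCone C).smul_mem hr ha⟩
end

section
/- Let α ∈ ℝ and C ∈ ℂ^{n×n}. If there exists ε > 0 such that e^{-iα}C + e^{iα}C* ≥ ε C* C (in the Loewner order), then the range of C and the kernel of C are orthogonal complements, i.e., ker(C) = ker(C*). -/
/-!
Write `M = a C + b Cᴴ - ε CᴴC ⪰ 0`. For `x ∈ ker C` the quadratic form is
`x* M x = b · conj (x* C x) = 0`, and a positive semidefinite form vanishes at `x` only if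
`M x = 0`; but `M x = b Cᴴ x`. For `x ∈ ker Cᴴ` the quadratic form is `-ε ‖C x‖²`, which is
nonnegative only if `C x = 0`.
-/

open Matrix
open scoped ComplexOrder

namespace Matrix

variable {n R : Type*} [Fintype n]

theorem dotProduct_conjTranspose_mulVec [CommSemiring R] [StarRing R] (A : Matrix n n R)
    (x : n → R) : star x ⬝ᵥ (Aᴴ *ᵥ x) = star (star x ⬝ᵥ (A *ᵥ x)) := by
  rw [star_dotProduct, star_mulVec, conjTranspose_conjTranspose, ← dotProduct_mulVec]

theorem dotProduct_conjTranspose_mul_self_mulVec [CommSemiring R] [StarRing R]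
    (A : Matrix n n R) (x : n → R) :
    star x ⬝ᵥ ((Aᴴ * A) *ᵥ x) = star (A *ᵥ x) ⬝ᵥ (A *ᵥ x) := by
  rw [← mulVec_mulVec, dotProduct_mulVec, star_mulVec]

variable {𝕜 : Type*} [RCLike 𝕜] {C : Matrix n n 𝕜} {a b : 𝕜} {ε : ℝ} {x : n → 𝕜}

theorem conjTranspose_mulVec_eq_zero_of_posSemidef (hb : b ≠ 0)
    (hM : (a • C + b • Cᴴ - ε • (Cᴴ * C)).PosSemidef) (hx : C *ᵥ x = 0) : Cᴴ *ᵥ x = 0 := by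
  have hMx : (a • C + b • Cᴴ - ε • (Cᴴ * C)) *ᵥ x = b • (Cᴴ *ᵥ x) := by
    simp [sub_mulVec, add_mulVec, smul_mulVec, ← mulVec_mulVec, hx]
  have hquad : star x ⬝ᵥ ((a • C + b • Cᴴ - ε • (Cᴴ * C)) *ᵥ x) = 0 := by
    rw [hMx, dotProduct_smul, dotProduct_conjTranspose_mulVec, hx, dotProduct_zero, star_zero,
      smul_zero]
  have hMx_zero := (hM.dotProduct_mulVec_zero_iff x).mp hquad
  rwa [hMx, smul_eq_zero_iff_right hb] at hMx_zero

theorem mulVec_eq_zero_of_posSemidef (hε : 0 < ε)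
    (hM : (a • C + b • Cᴴ - ε • (Cᴴ * C)).PosSemidef) (hx : Cᴴ *ᵥ x = 0) : C *ᵥ x = 0 := by
  have hCx : star x ⬝ᵥ (C *ᵥ x) = 0 := by
    simpa [hx] using dotProduct_conjTranspose_mulVec Cᴴ x
  have hquad : star x ⬝ᵥ ((a • C + b • Cᴴ - ε • (Cᴴ * C)) *ᵥ x)
      = -((ε : 𝕜) * (star (C *ᵥ x) ⬝ᵥ (C *ᵥ x))) := by
    simp [sub_mulVec, add_mulVec, smul_mulVec, dotProduct_smul, hx, hCx,
      dotProduct_conjTranspose_mul_self_mulVec, RCLike.real_smul_eq_coe_mul]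
  have hq : (ε : 𝕜) * (star (C *ᵥ x) ⬝ᵥ (C *ᵥ x)) = 0 := by
    have hnonneg := hM.dotProduct_mulVec_nonneg x
    rw [hquad, neg_nonneg] at hnonneg
    exact le_antisymm hnonneg
      (mul_nonneg (RCLike.ofReal_nonneg.mpr hε.le) (dotProduct_star_self_nonneg _))
  exact dotProduct_star_self_eq_zero.mp
    ((mul_eq_zero.mp hq).resolve_left (RCLike.ofReal_ne_zero.mpr hε.ne'))

end Matrix

/-- If `e^{-iα} C + e^{iα} C* ≥ ε C* C` for some `ε > 0`, then the kernel of `C`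
equals the kernel of `C*` (so range and kernel of `C` are orthogonal complements). -/
theorem quasiSectorial_ker_eq (n : ℕ) (α : ℝ) (C : Matrix (Fin n) (Fin n) ℂ)
    (h : ∃ ε : ℝ, 0 < ε ∧
      (Complex.exp (-(α : ℂ) * Complex.I) • C + Complex.exp ((α : ℂ) * Complex.I) • Cᴴ
        - ε • (Cᴴ * C)).PosSemidef) :
    ∀ x : Fin n → ℂ, C.mulVec x = 0 ↔ Cᴴ.mulVec x = 0 := by
  obtain ⟨ε, hε, hM⟩ := h
  exact fun x => ⟨conjTranspose_mulVec_eq_zero_of_posSemidef (Complex.exp_ne_zero _) hM,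
    mulVec_eq_zero_of_posSemidef hε hM⟩
end

section
/- A matrix C ∈ ℂ^{n×n} satisfies C + C* ≥ ε C* C for some ε > 0 if and only if there exist a unitary U and a matrix C_s ∈ ℂ^{r×r} (r = rank C) with C_s + C_s* > 0 such that C = U · diag(0_{n−r}, C_s) · U*. -/
/-!
If `C + Cᴴ ≥ ε CᴴC`, the quadratic form of `C + Cᴴ - ε CᴴC` vanishes on `ker C`, so this positive
semidefinite matrix kills `ker C`, which gives `ker C ⊆ ker Cᴴ`. In an orthonormal basis that starts
with a basis of `ker C` the matrix of `C` is then `diag(0, C_s)` with `C_s` injective, and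
`x*(C_s + C_s*)x ≥ ε |C_s x|² > 0` for `x ≠ 0`. Conversely, the inequality is invariant under
unitary similarity and passes between `diag(0, C_s)` and `C_s`, and for `C_s + C_s* > 0` the
constant `ε = λ_min(C_s + C_s*) / λ_max(C_s* C_s)` works.
-/

open Matrix Module
open scoped ComplexOrder

theorem Submodule.exists_orthonormalBasis_inl_mem {𝕜 E : Type*} [RCLike 𝕜]
    [NormedAddCommGroup E] [InnerProductSpace 𝕜 E] [FiniteDimensional 𝕜 E] (K : Submodule 𝕜 E) :
    ∃ b : OrthonormalBasis (Fin (finrank 𝕜 K) ⊕ Fin (finrank 𝕜 Kᗮ)) 𝕜 E, ∀ i, b (.inl i) ∈ K :=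
  ⟨((stdOrthonormalBasis 𝕜 K).prod (stdOrthonormalBasis 𝕜 Kᗮ)).map K.orthogonalDecomposition.symm,
    fun i => by simp⟩

namespace Matrix

section BlockMatrix

variable {m n p q : Type*} [Fintype m] [Fintype n] [Fintype p] [Fintype q]

omit [Fintype m] in
theorem rank_fromBlocks_zero {R : Type*} [CommRing R] [StrongRankCondition R] (A : Matrix p q R) :
    (fromBlocks (0 : Matrix m n R) 0 0 A).rank = A.rank := by
  classical
  refine le_antisymm ?_ (rank_submatrix_le (fromBlocks (0 : Matrix m n R) 0 0 A) .inr .inr)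
  have hfactor : fromBlocks (0 : Matrix m n R) 0 0 A =
      fromRows (0 : Matrix m p R) (1 : Matrix p p R) * A *
        fromCols (0 : Matrix q n R) (1 : Matrix q q R) := by
    rw [fromRows_mul, fromRows_mul_fromCols]
    simp
  rw [hfactor]
  exact (rank_mul_le_left _ _).trans (rank_mul_le_right _ _)

theorem mulVec_injective_of_rank_eq_card {K : Type*} [Field K] {A : Matrix n n K}
    (h : A.rank = Fintype.card n) : Function.Injective A.mulVec := by
  have hsum := LinearMap.finrank_range_add_finrank_ker A.mulVecLin
  rw [← rank, h, finrank_fintype_fun_eq_card] at hsum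
  have hker : finrank K (LinearMap.ker A.mulVecLin) = 0 := by omega
  exact LinearMap.ker_eq_bot.mp (Submodule.finrank_eq_zero.mp hker)

theorem posSemidef_fromBlocks_zero_iff {R : Type*} [CommRing R] [PartialOrder R] [StarRing R]
    {A : Matrix p p R} : (fromBlocks (0 : Matrix m m R) 0 0 A).PosSemidef ↔ A.PosSemidef := by
  classical
  refine ⟨fun h => h.submatrix Sum.inr, fun h => ?_⟩
  set B : Matrix p (m ⊕ p) R := fromCols 0 1
  have hconj : fromBlocks (0 : Matrix m m R) 0 0 A = Bᴴ * A * B := by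
    rw [conjTranspose_fromCols_eq_fromRows_conjTranspose, fromRows_mul, fromRows_mul_fromCols]
    simp
  exact hconj ▸ h.conjTranspose_mul_mul_same B

end BlockMatrix

variable {𝕜 : Type*} [RCLike 𝕜] {m n p : Type*} [Fintype m] [Fintype n] [Fintype p]

def IsQuasiStrictlyAccretive (C : Matrix n n 𝕜) : Prop :=
  ∃ ε : ℝ, 0 < ε ∧ (C + Cᴴ - ε • (Cᴴ * C)).PosSemidef

theorem IsQuasiStrictlyAccretive.conjTranspose_mulVec_eq_zero {C : Matrix n n 𝕜}
    (hC : C.IsQuasiStrictlyAccretive) {x : n → 𝕜} (hx : C *ᵥ x = 0) : Cᴴ *ᵥ x = 0 := by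
  obtain ⟨ε, -, hQ⟩ := hC
  have hQx : (C + Cᴴ - ε • (Cᴴ * C)) *ᵥ x = Cᴴ *ᵥ x := by
    simp [sub_mulVec, add_mulVec, smul_mulVec, ← mulVec_mulVec, hx]
  rw [← hQx, ← hQ.dotProduct_mulVec_zero_iff, hQx, dotProduct_mulVec, ← star_mulVec, hx,
    star_zero, zero_dotProduct]

theorem IsQuasiStrictlyAccretive.posDef_add_conjTranspose {A : Matrix n n 𝕜}
    (hA : A.IsQuasiStrictlyAccretive) (hinj : Function.Injective A.mulVec) : (A + Aᴴ).PosDef := by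
  obtain ⟨ε, hε, hQ⟩ := hA
  refine .of_dotProduct_mulVec_pos (isHermitian_add_transpose_self A) fun x hx => ?_
  have hAx : 0 < star (A *ᵥ x) ⬝ᵥ (A *ᵥ x) :=
    dotProduct_star_self_pos_iff.2 fun h => hx (hinj (h.trans (mulVec_zero A).symm))
  have hform := hQ.dotProduct_mulVec_nonneg x
  rw [sub_mulVec, dotProduct_sub, smul_mulVec, dotProduct_smul, ← mulVec_mulVec,
    dotProduct_mulVec _ Aᴴ, ← star_mulVec, sub_nonneg] at hform
  calc (0 : 𝕜) < (ε : 𝕜) * (star (A *ᵥ x) ⬝ᵥ (A *ᵥ x)) := mul_pos (by exact_mod_cast hε) hAx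
    _ = ε • (star (A *ᵥ x) ⬝ᵥ (A *ᵥ x)) := (RCLike.real_smul_eq_coe_mul _ _).symm
    _ ≤ _ := hform

theorem isQuasiStrictlyAccretive_reindex_iff (e : m ≃ n) {D : Matrix m m 𝕜} :
    (reindex e e D).IsQuasiStrictlyAccretive ↔ D.IsQuasiStrictlyAccretive := by
  have hreindex (ε : ℝ) :
      reindex e e D + (reindex e e D)ᴴ - ε • ((reindex e e D)ᴴ * reindex e e D) =
        (D + Dᴴ - ε • (Dᴴ * D)).submatrix e.symm e.symm := by
    simp [conjTranspose_submatrix, submatrix_mul_equiv, submatrix_add, submatrix_sub,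
      submatrix_smul]
  simp only [IsQuasiStrictlyAccretive, hreindex, posSemidef_submatrix_equiv]

theorem isQuasiStrictlyAccretive_fromBlocks_zero_iff {A : Matrix p p 𝕜} :
    (fromBlocks (0 : Matrix m m 𝕜) 0 0 A).IsQuasiStrictlyAccretive ↔
      A.IsQuasiStrictlyAccretive := by
  have hblocks (ε : ℝ) :
      fromBlocks (0 : Matrix m m 𝕜) 0 0 A + (fromBlocks (0 : Matrix m m 𝕜) 0 0 A)ᴴ -
          ε • ((fromBlocks (0 : Matrix m m 𝕜) 0 0 A)ᴴ * fromBlocks 0 0 0 A) =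
        fromBlocks 0 0 0 (A + Aᴴ - ε • (Aᴴ * A)) := by
    simp [fromBlocks_conjTranspose, fromBlocks_multiply, fromBlocks_smul, fromBlocks_add,
      sub_eq_add_neg, fromBlocks_neg]
  simp only [IsQuasiStrictlyAccretive, hblocks, posSemidef_fromBlocks_zero_iff]

variable [DecidableEq n]

theorem isQuasiStrictlyAccretive_unitary_conj_iff {U : Matrix n n 𝕜}
    (hU : U ∈ unitaryGroup n 𝕜) {D : Matrix n n 𝕜} :
    (U * D * Uᴴ).IsQuasiStrictlyAccretive ↔ D.IsQuasiStrictlyAccretive := by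
  have hconj (ε : ℝ) : U * D * Uᴴ + (U * D * Uᴴ)ᴴ - ε • ((U * D * Uᴴ)ᴴ * (U * D * Uᴴ)) =
      U * (D + Dᴴ - ε • (Dᴴ * D)) * star U := by
    let φ := Unitary.conjStarAlgAut ℝ (Matrix n n 𝕜) ⟨U, hU⟩
    have hφ (X : Matrix n n 𝕜) : U * X * star U = φ X := rfl
    simp only [← star_eq_conjTranspose, hφ, map_sub, map_add, map_smul, map_mul, map_star]
  simp only [IsQuasiStrictlyAccretive, hconj,
    (Unitary.isUnit_coe (U := ⟨U, hU⟩)).posSemidef_star_right_conjugate_iff]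

theorem isQuasiStrictlyAccretive_unitary_conj_reindex_fromBlocks_iff {U : Matrix n n 𝕜}
    (hU : U ∈ unitaryGroup n 𝕜) (e : n ≃ m ⊕ p) {A : Matrix p p 𝕜} :
    (U * reindex e.symm e.symm (fromBlocks 0 0 0 A) * Uᴴ).IsQuasiStrictlyAccretive ↔
      A.IsQuasiStrictlyAccretive := by
  rw [isQuasiStrictlyAccretive_unitary_conj_iff hU, isQuasiStrictlyAccretive_reindex_iff,
    isQuasiStrictlyAccretive_fromBlocks_zero_iff]

theorem rank_unitary_conj {U : Matrix n n 𝕜} (hU : U ∈ unitaryGroup n 𝕜) (D : Matrix n n 𝕜) :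
    (U * D * Uᴴ).rank = D.rank := by
  have hdet (V : Matrix n n 𝕜) (hV : V ∈ unitaryGroup n 𝕜) : IsUnit V.det :=
    (isUnit_iff_isUnit_det V).mp (Unitary.isUnit_coe (U := ⟨V, hV⟩))
  rw [rank_mul_eq_left_of_isUnit_det Uᴴ _ (hdet _ (Unitary.star_mem hU)),
    rank_mul_eq_right_of_isUnit_det U _ (hdet U hU)]

open scoped MatrixOrder in
theorem PosDef.exists_pos_posSemidef_sub_smul {A B : Matrix n n 𝕜} (hA : A.PosDef)
    (hB : B.PosSemidef) : ∃ ε : ℝ, 0 < ε ∧ (A - ε • B).PosSemidef := by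
  obtain ⟨r, hr, hrA⟩ : ∃ r > 0, algebraMap ℝ (Matrix n n 𝕜) r ≤ A := by
    cases isEmpty_or_nonempty n
    · exact ⟨1, one_pos, le_of_eq (Subsingleton.elim _ _)⟩
    exact (CFC.exists_pos_algebraMap_le_iff hA.isHermitian.isSelfAdjoint).2
      fun x hx => (isStrictlyPositive_iff_posDef.2 hA).spectrum_pos hx
  obtain ⟨s, hs, hBs⟩ : ∃ s > 0, B ≤ algebraMap ℝ (Matrix n n 𝕜) s := by
    obtain ⟨s, hs⟩ := (isCompact_iff_compactSpace.mpr inferInstance :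
      IsCompact (spectrum ℝ B)).isBounded.bddAbove
    exact ⟨max s 1, by positivity, le_algebraMap_of_spectrum_le
      (fun x hx => (hs hx).trans (le_max_left _ _)) hB.isHermitian.isSelfAdjoint⟩
  refine ⟨r / s, div_pos hr hs, ?_⟩
  rw [← nonneg_iff_posSemidef, sub_nonneg]
  calc (r / s) • B ≤ (r / s) • algebraMap ℝ (Matrix n n 𝕜) s :=
        smul_le_smul_of_nonneg_left hBs (by positivity)
    _ = algebraMap ℝ _ r := by rw [Algebra.smul_def, ← map_mul, div_mul_cancel₀ r hs.ne']
    _ ≤ A := hrA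

theorem isQuasiStrictlyAccretive_of_posDef_add_conjTranspose {A : Matrix n n 𝕜}
    (hA : (A + Aᴴ).PosDef) : A.IsQuasiStrictlyAccretive :=
  hA.exists_pos_posSemidef_sub_smul (posSemidef_conjTranspose_mul_self A)

omit [Fintype m] [Fintype p] in
theorem eq_unitary_conj_reindex_fromBlocks_zero {C U : Matrix n n 𝕜}
    (hU : U ∈ unitaryGroup n 𝕜) (e : n ≃ m ⊕ p) (hker : ∀ i, C *ᵥ U.col (e.symm (.inl i)) = 0)
    (hker' : ∀ i, Cᴴ *ᵥ U.col (e.symm (.inl i)) = 0) :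
    C = U * reindex e.symm e.symm
      (fromBlocks 0 0 0 (reindex e e (Uᴴ * C * U)).toBlocks₂₂) * Uᴴ := by
  have hcol (i : m) (k : n) : (Uᴴ * C * U) k (e.symm (.inl i)) = 0 := by
    rw [mul_assoc, mul_apply]
    refine Finset.sum_eq_zero fun l _ => ?_
    rw [show (C * U) l _ = 0 from congrFun (hker i) l, mul_zero]
  have hrow (i : m) (k : n) : (Uᴴ * C * U) (e.symm (.inl i)) k = 0 := by
    have h : (Uᴴ * C) (e.symm (.inl i)) = 0 := by
      ext l
      rw [← conjTranspose_conjTranspose C, ← conjTranspose_mul, conjTranspose_apply,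
        show (Cᴴ * U) l _ = 0 from congrFun (hker' i) l, star_zero, Pi.zero_apply]
    rw [mul_apply, h]
    simp
  have hblocks : reindex e e (Uᴴ * C * U) =
      fromBlocks 0 0 0 (reindex e e (Uᴴ * C * U)).toBlocks₂₂ := by
    conv_lhs => rw [← fromBlocks_toBlocks (reindex e e (Uᴴ * C * U))]
    congr 1 <;> ext i j <;> simp [toBlocks₁₁, toBlocks₁₂, toBlocks₂₁, hcol, hrow]
  have hUU : U * Uᴴ = 1 := mem_unitaryGroup_iff.mp hU
  rw [← hblocks, reindex_apply, reindex_apply, submatrix_submatrix]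
  simp only [Equiv.symm_symm, Equiv.symm_comp_self, submatrix_id_id, mul_assoc, hUU, mul_one]
  rw [← mul_assoc, hUU, one_mul]

theorem exists_unitary_mulVec_col_eq_zero {n : ℕ} (C : Matrix (Fin n) (Fin n) 𝕜) :
    ∃ U ∈ unitaryGroup (Fin n) 𝕜, ∃ e : Fin n ≃ Fin (n - C.rank) ⊕ Fin C.rank,
      ∀ i, C *ᵥ U.col (e.symm (.inl i)) = 0 := by
  have hrange : finrank 𝕜 (LinearMap.range (toEuclideanLin C)) = C.rank := by
    rw [rank_eq_finrank_range_toLin C (EuclideanSpace.basisFun (Fin n) 𝕜).toBasis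
      (EuclideanSpace.basisFun (Fin n) 𝕜).toBasis, toEuclideanLin_eq_toLin_orthonormal]
  have hK : finrank 𝕜 (LinearMap.ker (toEuclideanLin C)) = n - C.rank := by
    have := LinearMap.finrank_range_add_finrank_ker (toEuclideanLin C)
    simp only [hrange, finrank_euclideanSpace_fin] at this
    omega
  have hK' : finrank 𝕜 (LinearMap.ker (toEuclideanLin C))ᗮ = C.rank := by
    have := (LinearMap.ker (toEuclideanLin C)).finrank_add_finrank_orthogonal
    simp only [hK, finrank_euclideanSpace_fin] at this
    have := C.rank_le_width
    omega
  obtain ⟨b, hb⟩ := (LinearMap.ker (toEuclideanLin C)).exists_orthonormalBasis_inl_mem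
  let e : Fin n ≃ Fin (n - C.rank) ⊕ Fin C.rank :=
    (finCongr (by have := C.rank_le_width; omega)).trans finSumFinEquiv.symm
  let b' := b.reindex ((Equiv.sumCongr (finCongr hK) (finCongr hK')).trans e.symm)
  refine ⟨_, (EuclideanSpace.basisFun (Fin n) 𝕜).toMatrix_orthonormalBasis_mem_unitary b', e,
    fun i => ?_⟩
  have hcol : ((EuclideanSpace.basisFun (Fin n) 𝕜).toBasis.toMatrix b').col (e.symm (.inl i)) =
      (b (.inl ((finCongr hK).symm i))).ofLp := by
    ext k
    simp [col_apply, Module.Basis.toMatrix_apply, b']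
  have hmem := hb ((finCongr hK).symm i)
  rw [LinearMap.mem_ker, toLpLin_apply] at hmem
  rw [hcol]
  simpa using congrArg WithLp.ofLp hmem

end Matrix

/-- A matrix `C` satisfies `C + C* ≥ ε C* C` for some `ε > 0` iff it is unitarily
similar to `diag(0_{n-r}, C_s)` with `r = rank C` and `C_s` strictly accretive. -/
theorem quasiStrictlyAccretive_iff_decomposition (n : ℕ) (C : Matrix (Fin n) (Fin n) ℂ) :
    (∃ ε : ℝ, 0 < ε ∧ (C + Cᴴ - ε • (Cᴴ * C)).PosSemidef) ↔
    ∃ U : Matrix (Fin n) (Fin n) ℂ, U ∈ Matrix.unitaryGroup (Fin n) ℂ ∧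
      ∃ Cs : Matrix (Fin C.rank) (Fin C.rank) ℂ, (Cs + Csᴴ).PosDef ∧
        ∃ e : Fin n ≃ (Fin (n - C.rank) ⊕ Fin C.rank),
          C = U * (Matrix.reindex e.symm e.symm (Matrix.fromBlocks 0 0 0 Cs)) * Uᴴ := by
  change C.IsQuasiStrictlyAccretive ↔ _
  constructor
  · intro hC
    obtain ⟨U, hU, e, hker⟩ := C.exists_unitary_mulVec_col_eq_zero
    have hCs := eq_unitary_conj_reindex_fromBlocks_zero hU e hker
      fun i => hC.conjTranspose_mulVec_eq_zero (hker i)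
    set Cs := (reindex e e (Uᴴ * C * U)).toBlocks₂₂
    refine ⟨U, hU, Cs, ?_, e, hCs⟩
    have hrank : Cs.rank = Fintype.card (Fin C.rank) := by
      have h := congrArg rank hCs
      rw [rank_unitary_conj hU, rank_reindex, rank_fromBlocks_zero] at h
      rw [Fintype.card_fin]
      exact h.symm
    rw [hCs, isQuasiStrictlyAccretive_unitary_conj_reindex_fromBlocks_iff hU] at hC
    exact hC.posDef_add_conjTranspose (mulVec_injective_of_rank_eq_card hrank)
  · rintro ⟨U, hU, Cs, hCs, e, hC⟩
    rw [hC, isQuasiStrictlyAccretive_unitary_conj_reindex_fromBlocks_iff hU]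
    exact isQuasiStrictlyAccretive_of_posDef_add_conjTranspose hCs
end

section
/- If A ∈ ℂ^{n×n} satisfies A + A* ≥ ε A*A for some ε > 0 (quasi-strictly accretive) and B ∈ ℂ^{n×n} satisfies B + B* ≥ 0 (accretive), then I + AB is nonsingular. -/
open Matrix
open scoped ComplexOrder

/-!
If `(1 + A * B) x = 0`, put `y = B x`, so that `A y = -x`. Then `⟨y, A y⟩ = -conj ⟨x, B x⟩`,
so accretivity of `B` gives `Re ⟨y, A y⟩ ≤ 0`, while quasi-strict accretivity of `A` gives
`2 Re ⟨y, A y⟩ ≥ ε ‖A y‖² = ε ‖x‖²`. Hence `x = 0`.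
-/

namespace Matrix

variable {ι 𝕜 : Type*} [Fintype ι] [RCLike 𝕜]

theorem star_dotProduct_conjTranspose_mulVec (M : Matrix ι ι 𝕜) (x : ι → 𝕜) :
    star x ⬝ᵥ (Mᴴ *ᵥ x) = star (star x ⬝ᵥ (M *ᵥ x)) := by
  rw [dotProduct_mulVec, ← star_mulVec, star_dotProduct]

theorem star_dotProduct_conjTranspose_mul_self_mulVec (M : Matrix ι ι 𝕜) (x : ι → 𝕜) :
    star x ⬝ᵥ ((Mᴴ * M) *ᵥ x) = star (M *ᵥ x) ⬝ᵥ (M *ᵥ x) := by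
  rw [← mulVec_mulVec, dotProduct_mulVec, ← star_mulVec]

theorem PosSemidef.dotProduct_mulVec_add_star_nonneg {B : Matrix ι ι 𝕜}
    (hB : (B + Bᴴ).PosSemidef) (x : ι → 𝕜) :
    0 ≤ star x ⬝ᵥ (B *ᵥ x) + star (star x ⬝ᵥ (B *ᵥ x)) := by
  simpa only [add_mulVec, dotProduct_add, star_dotProduct_conjTranspose_mulVec]
    using hB.dotProduct_mulVec_nonneg x

theorem PosSemidef.smul_dotProduct_le_dotProduct_mulVec_add_star
    {A : Matrix ι ι 𝕜} {ε : ℝ} (hA : (A + Aᴴ - ε • (Aᴴ * A)).PosSemidef) (y : ι → 𝕜) :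
    ε • (star (A *ᵥ y) ⬝ᵥ (A *ᵥ y)) ≤ star y ⬝ᵥ (A *ᵥ y) + star (star y ⬝ᵥ (A *ᵥ y)) := by
  simpa only [sub_mulVec, add_mulVec, smul_mulVec, dotProduct_sub, dotProduct_add,
    dotProduct_smul, star_dotProduct_conjTranspose_mulVec,
    star_dotProduct_conjTranspose_mul_self_mulVec, sub_nonneg]
    using hA.dotProduct_mulVec_nonneg y

theorem isUnit_one_add_mul_of_posSemidef [DecidableEq ι] {A B : Matrix ι ι 𝕜} {ε : ℝ}
    (hε : 0 < ε) (hA : (A + Aᴴ - ε • (Aᴴ * A)).PosSemidef) (hB : (B + Bᴴ).PosSemidef) :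
    IsUnit (1 + A * B) := by
  refine mulVec_injective_iff_isUnit.1 <| (injective_iff_map_eq_zero (1 + A * B).mulVecLin).2
    fun x hx => ?_
  set y := B *ᵥ x
  have hAy : A *ᵥ y = -x := by
    rw [mulVecLin_apply, add_mulVec, one_mulVec, ← mulVec_mulVec] at hx
    exact eq_neg_of_add_eq_zero_right hx
  have hyAy : star y ⬝ᵥ (A *ᵥ y) = -star (star x ⬝ᵥ y) := by
    rw [hAy, dotProduct_neg, star_dotProduct]
  have hA' : ε • (star x ⬝ᵥ x) ≤ -(star x ⬝ᵥ y + star (star x ⬝ᵥ y)) := by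
    have := hA.smul_dotProduct_le_dotProduct_mulVec_add_star y
    rw [hyAy, hAy, star_neg, neg_dotProduct, dotProduct_neg, neg_neg, star_neg, star_star] at this
    linear_combination this
  have hx0 : ε • (star x ⬝ᵥ x) ≤ 0 :=
    hA'.trans (neg_nonpos.2 (hB.dotProduct_mulVec_add_star_nonneg x))
  exact dotProduct_star_self_eq_zero.1 <|
    (nonpos_of_smul_nonpos_of_pos_left hx0 hε).antisymm (dotProduct_star_self_nonneg x)

end Matrix

/-- Matrix passivity theorem: if `A` is quasi-strictly accretive
(`A + A* ≥ ε A* A` for some `ε > 0`) and `B` is accretive (`B + B* ≥ 0`),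
then `I + AB` is nonsingular. -/
theorem passivity_matrix (n : ℕ) (A B : Matrix (Fin n) (Fin n) ℂ)
    (hA : ∃ ε : ℝ, 0 < ε ∧ (A + Aᴴ - ε • (Aᴴ * A)).PosSemidef)
    (hB : (B + Bᴴ).PosSemidef) :
    IsUnit (1 + A * B) := by
  obtain ⟨ε, hε, hAε⟩ := hA
  exact isUnit_one_add_mul_of_posSemidef hε hAε hB
end

section
/- If A, B ∈ ℂ^{n×n} are both strictly accretive, i.e., A + A* > 0 and B + B* > 0, then every eigenvalue λ of AB satisfies λ ∉ (−∞, 0], i.e., AB has no eigenvalue on the closed negative real axis; in particular I + AB is nonsingular. -/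
/-!
If `ABx = μx` with `x ≠ 0`, put `y = Bx`; it is nonzero because `B` is strictly accretive.
For real `μ` the two quadratic forms are then proportional,
`y* (A + A*) y = μ · x* (B + B*) x`, and as both are positive `μ` cannot be `≤ 0`.
Taking `μ = -1` shows that `I + AB` has trivial kernel.
-/

open Matrix
open scoped ComplexOrder

namespace Matrix

variable {ι R : Type*} [Fintype ι]

section CommRing

variable [CommRing R] [StarRing R]

lemma star_dotProduct_add_conjTranspose_mulVec (B : Matrix ι ι R) (x : ι → R) :
    star x ⬝ᵥ (B + Bᴴ) *ᵥ x = star x ⬝ᵥ B *ᵥ x + star (B *ᵥ x) ⬝ᵥ x := by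
  rw [add_mulVec, dotProduct_add, star_mulVec, ← dotProduct_mulVec]

lemma star_dotProduct_add_conjTranspose_mulVec_eq_mul_of_mulVec_mulVec_eq_smul
    {A B : Matrix ι ι R} {x : ι → R} {μ : R} (hμ : star μ = μ) (h : A *ᵥ B *ᵥ x = μ • x) :
    star (B *ᵥ x) ⬝ᵥ (A + Aᴴ) *ᵥ B *ᵥ x = μ * (star x ⬝ᵥ (B + Bᴴ) *ᵥ x) := by
  rw [star_dotProduct_add_conjTranspose_mulVec A, star_dotProduct_add_conjTranspose_mulVec B,
    h, star_smul, hμ, dotProduct_smul, smul_dotProduct, smul_eq_mul, smul_eq_mul]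
  ring

end CommRing

section Ordered

variable [CommRing R] [PartialOrder R] [StarRing R]

lemma mulVec_ne_zero_of_posDef_add_conjTranspose {B : Matrix ι ι R} (hB : (B + Bᴴ).PosDef)
    {x : ι → R} (hx : x ≠ 0) : B *ᵥ x ≠ 0 := by
  intro hBx
  have hpos := hB.dotProduct_mulVec_pos hx
  rw [star_dotProduct_add_conjTranspose_mulVec, hBx] at hpos
  simp at hpos

theorem not_nonpos_of_mulVec_eq_smul_of_posDef_add_conjTranspose [StarOrderedRing R]
    [IsOrderedRing R] {A B : Matrix ι ι R} (hA : (A + Aᴴ).PosDef) (hB : (B + Bᴴ).PosDef)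
    {x : ι → R} (hx : x ≠ 0) {μ : R} (h : (A * B) *ᵥ x = μ • x) : ¬μ ≤ 0 := by
  intro hμ
  have hreal : star μ = μ := by simpa using (IsSelfAdjoint.of_nonneg (neg_nonneg.2 hμ)).star_eq
  rw [← mulVec_mulVec] at h
  have hq := hA.dotProduct_mulVec_pos (mulVec_ne_zero_of_posDef_add_conjTranspose hB hx)
  rw [star_dotProduct_add_conjTranspose_mulVec_eq_mul_of_mulVec_mulVec_eq_smul hreal h] at hq
  exact hq.not_ge (mul_nonpos_of_nonpos_of_nonneg hμ (hB.dotProduct_mulVec_pos hx).le)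

end Ordered

theorem isUnit_one_add_mul_of_posDef_add_conjTranspose [DecidableEq ι] [Field R]
    [PartialOrder R] [StarRing R] [StarOrderedRing R] [IsOrderedRing R]
    {A B : Matrix ι ι R} (hA : (A + Aᴴ).PosDef) (hB : (B + Bᴴ).PosDef) :
    IsUnit (1 + A * B) := by
  rw [isUnit_iff_isUnit_det, isUnit_iff_ne_zero, Ne, ← exists_mulVec_eq_zero_iff]
  rintro ⟨x, hx, hker⟩
  rw [add_mulVec, one_mulVec, add_eq_zero_iff_eq_neg'] at hker
  refine not_nonpos_of_mulVec_eq_smul_of_posDef_add_conjTranspose hA hB hx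
    (μ := -1) ?_ (neg_nonpos.2 zero_le_one)
  rw [hker, neg_one_smul]

end Matrix

/-- If `A` and `B` are strictly accretive, then `AB` has no eigenvalue on the
closed negative real axis `(-∞, 0]`; in particular `I + AB` is nonsingular. -/
theorem strictlyAccretive_product_no_neg_eigenvalue (n : ℕ)
    (A B : Matrix (Fin n) (Fin n) ℂ)
    (hA : (A + Aᴴ).PosDef) (hB : (B + Bᴴ).PosDef) :
    (∀ μ : ℂ, (∃ x : Fin n → ℂ, x ≠ 0 ∧ (A * B).mulVec x = μ • x) →
      ¬(μ.im = 0 ∧ μ.re ≤ 0)) ∧ IsUnit (1 + A * B) := by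
  refine ⟨?_, isUnit_one_add_mul_of_posDef_add_conjTranspose hA hB⟩
  rintro μ ⟨x, hx, h⟩ ⟨him, hre⟩
  exact not_nonpos_of_mulVec_eq_smul_of_posDef_add_conjTranspose hA hB hx h
    (Complex.le_def.2 ⟨hre, him⟩)
end

section
/- If A, B ∈ ℂ^{n×n} with A strictly accretive (A + A* > 0) and B accretive (B + B* ≥ 0), then AB has no negative real eigenvalue. -/
open Matrix
open scoped ComplexOrder

/-- If `A` is strictly accretive and `B` is accretive, then `AB` has no
negative real eigenvalue. -/
theorem accretive_product_no_negative_real_eigenvalue (n : ℕ)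
    (A B : Matrix (Fin n) (Fin n) ℂ)
    (hA : (A + Aᴴ).PosDef) (hB : (B + Bᴴ).PosSemidef) :
    ∀ μ : ℝ, μ < 0 → ¬∃ x : Fin n → ℂ, x ≠ 0 ∧ (A * B).mulVec x = (μ : ℂ) • x := by
  rintro μ hμ ⟨x, hx, hABx⟩
  have hμ0 : (μ : ℂ) ≠ 0 := by exact_mod_cast hμ.ne
  set y := B.mulVec x with hy
  have hAy : A.mulVec y = (μ : ℂ) • x := by
    rw [hy, Matrix.mulVec_mulVec]; exact hABx
  have hy0 : y ≠ 0 := by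
    intro h
    apply hx
    have : (μ : ℂ) • x = 0 := by rw [← hAy, h, Matrix.mulVec_zero]
    rcases smul_eq_zero.mp this with h | h
    · exact absurd h hμ0
    · exact h
  -- q = star y ⬝ᵥ A y
  set q : ℂ := star y ⬝ᵥ A.mulVec y with hq
  have hstarq : star y ⬝ᵥ Aᴴ.mulVec y = star q := by
    simp only [hq, dotProduct, Matrix.mulVec, Matrix.conjTranspose_apply,
      star_sum, star_mul', star_star, Finset.mul_sum, Finset.sum_mul]
    rw [Finset.sum_comm]
    congr 1; ext i; congr 1; ext j; simp only [Pi.star_apply, star_star]; ring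
  have hqpos : 0 < q.re := by
    have := hA.dotProduct_mulVec_pos hy0
    rw [Matrix.add_mulVec, dotProduct_add, hstarq] at this
    have hre := (Complex.lt_def.mp this).1
    simp only [Complex.add_re, Complex.zero_re] at hre
    have hsr : (star q).re = q.re := by rw [Complex.star_def]; exact Complex.conj_re q
    linarith
  -- p = star x ⬝ᵥ y
  set p : ℂ := star x ⬝ᵥ y with hp
  have hpre : 0 ≤ p.re := by
    have := hB.dotProduct_mulVec_nonneg x
    rw [Matrix.add_mulVec, dotProduct_add] at this
    have hstarp : star x ⬝ᵥ Bᴴ.mulVec x = star p := by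
      simp only [hp, hy, dotProduct, Matrix.mulVec, Matrix.conjTranspose_apply,
        star_sum, star_mul', star_star, Finset.mul_sum, Finset.sum_mul]
      rw [Finset.sum_comm]
      congr 1; ext i; congr 1; ext j; simp only [Pi.star_apply, star_star]; ring
    rw [hstarp] at this
    have hfold : star x ⬝ᵥ B *ᵥ x = p := by rw [hp, hy]
    rw [hfold] at this
    have hre := (Complex.le_def.mp this).1
    simp only [Complex.add_re, Complex.zero_re] at hre
    have hsr : (star p).re = p.re := by rw [Complex.star_def]; exact Complex.conj_re p
    linarith
  -- relate p and q: μ * p = star q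
  have key : (μ : ℂ) * p = star q := by
    have hx' : star ((μ:ℂ) • x) ⬝ᵥ y = star (A.mulVec y) ⬝ᵥ y := by rw [hAy]
    have h1 : star ((μ:ℂ) • x) ⬝ᵥ y = (μ:ℂ) * p := by
      simp [hp, star_smul, smul_dotProduct, Complex.star_def,
        Complex.conj_ofReal, smul_eq_mul]
    have h2 : star (A.mulVec y) ⬝ᵥ y = star q := by
      simp only [hq, dotProduct, Matrix.mulVec, Pi.star_apply,
        star_sum, star_mul', star_star, Finset.mul_sum, Finset.sum_mul]
      congr 1; ext i; congr 1; ext j; ring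
    rw [← h1, hx', h2]
  have : μ * p.re = q.re := by
    have := congrArg Complex.re key
    simpa [Complex.conj_re, Complex.ofReal_mul, Complex.mul_re, Complex.ofReal_re,
      Complex.ofReal_im] using this
  nlinarith
end
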